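/- For a finite simple graph G = (V,E) and a positive integer k, the value (−1)^{|V|} χ_G(−k) equals the number of pairs (σ, O) where σ : V → {1, …, k} is a function and O is an acyclic orientation of G such that whenever u → w in O, we have σ(u) ≥ σ(w). -/

import Mathlib

open SimpleGraph Polynomial

/-- Number of proper colorings of `G` with `k` colors. -/
noncomputable def properColoringCount {V : Type*} (G : SimpleGraph V) (k : ℕ) : ℕ :=
  Nat.card {f : V → Fin k // ∀ u v, G.Adj u v → f u ≠ f v}

/-- `P` is the chromatic polynomial of `G`. -/
def IsChromaticPoly {V : Type*} (G : SimpleGraph V) (P : Polynomial ℤ) : Prop :=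
  ∀ k : ℕ, P.eval (k : ℤ) = properColoringCount G k

/-- `r` is an orientation of the simple graph `G`: every directed edge lies over an
edge of `G`, and every edge of `G` gets exactly one of its two directions. -/
def IsOrientation {V : Type*} (G : SimpleGraph V) (r : V → V → Prop) : Prop :=
  (∀ u v, r u v → G.Adj u v) ∧ (∀ u v, G.Adj u v → (r u v ↔ ¬ r v u))

/-- A directed relation is acyclic if it has no directed cycles. -/
def IsAcyclicRel {V : Type*} (r : V → V → Prop) : Prop :=
  ∀ v, ¬ Relation.TransGen r v v

/-- The number of acyclic orientations of `G`. -/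
noncomputable def acyclicOrientationCount {V : Type*} (G : SimpleGraph V) : ℕ :=
  Nat.card {r : V → V → Prop // IsOrientation G r ∧ IsAcyclicRel r}


/-!
Deletion–contraction along an edge `uv`. Proper colorings give `χ_{G-uv} = χ_G + χ_{G/uv}`.
A compatible pair of `G - uv` extends to `G`: if `σ u ≠ σ v`, only by orienting `uv` downhill,
which closes no cycle since `σ` does not increase along paths; if `σ u = σ v`, by every orientation
of `uv` that closes no cycle, which is at least one, and both exactly when neither of `u`, `v`
reaches the other. Those pairs with two extensions are the pullbacks of the compatible pairs of
`G/uv`. Hence `#(G) = #(G - uv) + #(G/uv)`, the chromatic recursion twisted by the sign `(-1)^|V|`,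
as `G/uv` has one vertex fewer. Induction on the number of edges ends at edgeless graphs, where both
sides equal `k^|V|`.
-/

open Relation

theorem Nat.card_subtype_ne_add_one {V : Type*} [Finite V] (v : V) :
    Nat.card {x : V // x ≠ v} + 1 = Nat.card V := by
  have h := Set.ncard_compl_add_ncard ({v} : Set V)
  rw [Set.ncard_singleton, ← Nat.card_coe_set_eq] at h
  exact h

theorem Nat.card_subtype_eq_card_and_add_card_and_not {β : Type*} [Finite β] (p q : β → Prop) :
    Nat.card {b // p b} = Nat.card {b // p b ∧ q b} + Nat.card {b // p b ∧ ¬ q b} := by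
  have h := Set.ncard_inter_add_ncard_sdiff_eq_ncard {b | p b} {b | q b}
  simp only [← Nat.card_coe_set_eq] at h
  exact h.symm

theorem Nat.card_subtype_add_card_subtype_of_or {β : Type*} [Finite β] {p q : β → Prop}
    (h : ∀ b, p b ∨ q b) :
    Nat.card {b // p b} + Nat.card {b // q b} = Nat.card β + Nat.card {b // p b ∧ q b} := by
  have hu : {b | p b} ∪ {b | q b} = Set.univ := Set.eq_univ_of_forall h
  have hpq := Set.ncard_union_add_ncard_inter {b | p b} {b | q b}
  rw [hu, Set.ncard_univ] at hpq
  simp only [← Nat.card_coe_set_eq] at hpq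
  exact hpq.symm

section Relations
variable {V W : Type*} {r s : V → V → Prop}

theorem IsAcyclicRel.mono (hs : IsAcyclicRel s) (h : r ≤ s) : IsAcyclicRel r :=
  fun a ha => hs a (TransGen.mono h a a ha)

theorem IsAcyclicRel.asymm (hr : IsAcyclicRel r) {a b : V} (hab : r a b) : ¬ r b a :=
  fun hba => hr a (.tail (.single hab) hba)

theorem IsAcyclicRel.onFun (hr : IsAcyclicRel r) (f : W → V) :
    IsAcyclicRel fun a b => r (f a) (f b) :=
  fun a ha => hr (f a) (TransGen.lift f le_rfl a a ha)

theorem le_of_reflTransGen {α : Type*} [Preorder α] {f : V → α} (hf : ∀ a b, r a b → f b ≤ f a)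
    {a b : V} (h : ReflTransGen r a b) : f b ≤ f a := by
  simpa [reflTransGen_eq_self] using ReflTransGen.lift (p := fun x y : α => y ≤ x) f hf a b h

def addArc (r : V → V → Prop) (x y : V) : V → V → Prop := fun a b => r a b ∨ (a = x ∧ b = y)

variable {x y : V}

theorem transGen_addArc {a b : V} (h : TransGen (addArc r x y) a b) :
    TransGen r a b ∨ ReflTransGen r a x ∧ ReflTransGen r y b := by
  induction h with
  | single h =>
    rcases h with h | ⟨rfl, rfl⟩
    exacts [.inl (.single h), .inr ⟨.refl, .refl⟩]
  | tail _ h ih =>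
    rcases h with h | ⟨rfl, rfl⟩
    · exact ih.imp (·.tail h) fun ⟨hax, hyb⟩ => ⟨hax, hyb.tail h⟩
    · exact .inr ⟨ih.elim (·.to_reflTransGen) (·.1), .refl⟩

theorem isAcyclicRel_addArc_iff :
    IsAcyclicRel (addArc r x y) ↔ IsAcyclicRel r ∧ ¬ ReflTransGen r y x := by
  refine ⟨fun h => ⟨h.mono fun a b => .inl, fun hyx => h x ?_⟩, fun ⟨hr, hyx⟩ a ha => ?_⟩
  · exact .head' (.inr ⟨rfl, rfl⟩) (ReflTransGen.mono (fun _ _ => .inl) y x hyx)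
  · rcases transGen_addArc ha with ha | ⟨hax, hya⟩
    exacts [hr a ha, hyx (hya.trans hax)]

theorem isAcyclicRel_addArc_of_le_onFun {f : V → W} {t : W → W → Prop} (ht : IsAcyclicRel t)
    (hr : r ≤ fun a b => t (f a) (f b)) (hxy : x ≠ y) (hf : f x = f y) :
    IsAcyclicRel (addArc r x y) := by
  refine isAcyclicRel_addArc_iff.2 ⟨(ht.onFun f).mono hr, fun hyx => ?_⟩
  rcases reflTransGen_iff_eq_or_transGen.1 hyx with rfl | hyx
  · exact hxy rfl
  · have hfyx : TransGen t (f y) (f x) := TransGen.lift f hr y x hyx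
    exact ht (f x) (hf ▸ hfyx)

theorem IsAcyclicRel.map_of_glue {S : Set V} {f : V → W} (hr : IsAcyclicRel r)
    (hS : ∀ s ∈ S, ∀ t ∈ S, ¬ TransGen r s t) (hf : ∀ a b, f a = f b → a = b ∨ a ∈ S ∧ b ∈ S) :
    IsAcyclicRel (Relation.Map r f f) := by
  -- a lifted path either stays in `r`, or enters `S`, jumps inside `S`, and leaves it again
  have lift : ∀ c d, TransGen (Relation.Map r f f) c d → ∃ a m, f a = c ∧ f m = d ∧
      (TransGen r a m ∨ ∃ s ∈ S, ∃ t ∈ S, ReflTransGen r a s ∧ TransGen r t m) := by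
    intro c d h
    induction h with
    | single h =>
      obtain ⟨a, b, hab, rfl, rfl⟩ := h
      exact ⟨a, b, rfl, rfl, .inl (.single hab)⟩
    | tail _ h ih =>
      obtain ⟨x, y, hxy, hx, rfl⟩ := h
      obtain ⟨a, m, rfl, hm, hp⟩ := ih
      refine ⟨a, y, rfl, rfl, ?_⟩
      rcases hf m x (hm.trans hx.symm) with rfl | ⟨hmS, hxS⟩
      · exact hp.imp (·.tail hxy) fun ⟨s, hs, t, ht, has, htm⟩ => ⟨s, hs, t, ht, has, htm.tail hxy⟩
      · refine .inr ?_
        rcases hp with ham | ⟨s, hs, -, -, has, -⟩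
        exacts [⟨m, hmS, x, hxS, ham.to_reflTransGen, .single hxy⟩,
          ⟨s, hs, x, hxS, has, .single hxy⟩]
  intro c hc
  obtain ⟨a, m, rfl, hm, hp⟩ := lift _ _ hc
  rcases hf m a hm with rfl | ⟨hmS, haS⟩
  · rcases hp with ham | ⟨s, hs, t, ht, has, htm⟩
    exacts [hr m ham, hS t ht s hs (htm.trans_left has)]
  · rcases hp with ham | ⟨s, hs, t, ht, has, htm⟩
    exacts [hS a haS m hmS ham, hS t ht m hmS htm]

end Relations

theorem IsOrientation.comap {V W : Type*} {G : SimpleGraph W} {O : W → W → Prop}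
    (hO : IsOrientation G O) (f : V → W) :
    IsOrientation (G.comap f) fun a b => O (f a) (f b) :=
  ⟨fun _ _ h => hO.1 _ _ h, fun _ _ h => hO.2 _ _ h⟩

section DeleteEdge
variable {V : Type*} {G H : SimpleGraph V} {O : V → V → Prop} {x y : V}

theorem IsOrientation.restrict (hO : IsOrientation G O) (hHG : H ≤ G) :
    IsOrientation H fun a b => O a b ∧ H.Adj a b := by
  refine ⟨fun a b h => h.2, fun a b hab => ⟨fun h h' => (hO.2 a b (hHG hab)).1 h.1 h'.1, ?_⟩⟩
  exact fun h => ⟨(hO.2 a b (hHG hab)).2 fun h' => h ⟨h', hab.symm⟩, hab⟩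

theorem IsOrientation.addArc (hO : IsOrientation (G.deleteEdges {s(x, y)}) O)
    (hxy : G.Adj x y) : IsOrientation G (addArc O x y) := by
  refine ⟨fun a b => ?_, fun a b hab => ?_⟩
  · rintro (h | ⟨rfl, rfl⟩)
    exacts [(hO.1 a b h).1, hxy]
  by_cases he : s(a, b) = s(x, y)
  · have hx : ¬ O x y := fun h => by simpa using hO.1 x y h
    have hy : ¬ O y x := fun h => by simpa [Sym2.eq_swap] using hO.1 y x h
    rcases Sym2.eq_iff.1 he with ⟨rfl, rfl⟩ | ⟨rfl, rfl⟩ <;>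
      simp [_root_.addArc, hx, hy, hxy.ne, hxy.ne']
  · have hab' : (G.deleteEdges {s(x, y)}).Adj a b := by simpa [hab] using he
    have hba : ¬ (b = x ∧ a = y) := by rintro ⟨rfl, rfl⟩; exact he Sym2.eq_swap
    have hab'' : ¬ (a = x ∧ b = y) := by rintro ⟨rfl, rfl⟩; exact he rfl
    simpa [_root_.addArc, hab'', hba] using hO.2 a b hab'

theorem addArc_restrict (hO : IsOrientation G O) (hxy : O x y) :
    addArc (fun a b => O a b ∧ (G.deleteEdges {s(x, y)}).Adj a b) x y = O := by
  ext a b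
  refine ⟨by rintro (h | ⟨rfl, rfl⟩); exacts [h.1, hxy], fun hab => ?_⟩
  by_cases he : s(a, b) = s(x, y)
  · rcases Sym2.eq_iff.1 he with ⟨rfl, rfl⟩ | ⟨rfl, rfl⟩
    · exact .inr ⟨rfl, rfl⟩
    · exact absurd hab ((hO.2 _ _ (hO.1 _ _ hxy)).1 hxy)
  · exact .inl ⟨hab, by simpa [hO.1 a b hab] using he⟩

theorem restrict_addArc (hO : IsOrientation (G.deleteEdges {s(x, y)}) O) :
    (fun a b => addArc O x y a b ∧ (G.deleteEdges {s(x, y)}).Adj a b) = O := by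
  ext a b
  refine ⟨?_, fun h => ⟨.inl h, hO.1 a b h⟩⟩
  rintro ⟨h | ⟨rfl, rfl⟩, hab⟩
  exacts [h, by simp at hab]

def deleteEdgesColoringEquiv {α : Type*} {u v : V} (huv : G.Adj u v) :
    {σ : V → α // (∀ a b, (G.deleteEdges {s(u, v)}).Adj a b → σ a ≠ σ b) ∧ σ u ≠ σ v} ≃
      {σ : V → α // ∀ a b, G.Adj a b → σ a ≠ σ b} := by
  refine Equiv.subtypeEquivRight fun σ => ⟨fun ⟨hσ, hσuv⟩ a b hab => ?_,
    fun hσ => ⟨fun a b h => hσ a b h.1, hσ u v huv⟩⟩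
  by_cases he : s(a, b) = s(u, v)
  · rcases Sym2.eq_iff.1 he with ⟨rfl, rfl⟩ | ⟨rfl, rfl⟩
    exacts [hσuv, hσuv.symm]
  · exact hσ a b (by simpa [hab] using he)

end DeleteEdge

abbrev CompatiblePair {V : Type*} (G : SimpleGraph V) (α : Type*) [LE α] :=
  {p : (V → α) × (V → V → Prop) //
    IsOrientation G p.2 ∧ IsAcyclicRel p.2 ∧ ∀ u w, p.2 u w → p.1 w ≤ p.1 u}

namespace CompatiblePair
variable {V α : Type*} [LinearOrder α] {G : SimpleGraph V}

def AdmitsArc (q : CompatiblePair G α) (x y : V) : Prop :=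
  q.1.1 y ≤ q.1.1 x ∧ IsAcyclicRel (addArc q.1.2 x y)

theorem admitsArc_or_admitsArc (q : CompatiblePair G α) {x y : V} (hxy : x ≠ y) :
    q.AdmitsArc x y ∨ q.AdmitsArc y x := by
  obtain ⟨⟨σ, O⟩, -, hA, hC⟩ := q
  wlog h : σ y ≤ σ x generalizing x y
  · exact (this hxy.symm (le_of_not_ge h)).symm
  by_contra! hn
  have hyx : ReflTransGen O y x := by
    by_contra hyx
    exact hn.1 ⟨h, isAcyclicRel_addArc_iff.2 ⟨hA, hyx⟩⟩
  have hxy' : ReflTransGen O x y := by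
    by_contra hxy'
    exact hn.2 ⟨le_of_reflTransGen hC hyx, isAcyclicRel_addArc_iff.2 ⟨hA, hxy'⟩⟩
  rcases reflTransGen_iff_eq_or_transGen.1 hxy' with rfl | hxy'
  exacts [hxy rfl, hA x (hxy'.trans_left hyx)]

def equivAdmitsArc {x y : V} (hxy : G.Adj x y) :
    {p : CompatiblePair G α // p.1.2 x y} ≃
      {q : CompatiblePair (G.deleteEdges {s(x, y)}) α // q.AdmitsArc x y} where
  toFun := fun ⟨⟨⟨σ, O⟩, hO, hA, hC⟩, hOxy⟩ =>
    ⟨⟨(σ, fun a b => O a b ∧ (G.deleteEdges {s(x, y)}).Adj a b),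
        hO.restrict (G.deleteEdges_le _), hA.mono fun _ _ => And.left,
        fun a b h => hC a b h.1⟩,
      hC x y hOxy, by rwa [addArc_restrict hO hOxy]⟩
  invFun := fun ⟨⟨⟨σ, O⟩, hO, hA, hC⟩, hσ, hAxy⟩ =>
    ⟨⟨(σ, addArc O x y), hO.addArc hxy, hAxy, by
      rintro a b (h | ⟨rfl, rfl⟩)
      exacts [hC a b h, hσ]⟩,
      .inr ⟨rfl, rfl⟩⟩
  left_inv := fun ⟨⟨⟨_, _⟩, hO, _, _⟩, hOxy⟩ =>
    Subtype.ext <| Subtype.ext <| Prod.ext rfl (addArc_restrict hO hOxy)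
  right_inv := fun ⟨⟨⟨_, _⟩, hO, _, _⟩, _, _⟩ =>
    Subtype.ext <| Subtype.ext <| Prod.ext rfl (restrict_addArc hO)

theorem card_eq_card_deleteEdges_add [Finite V] [Finite α] {u v : V} (huv : G.Adj u v) :
    Nat.card (CompatiblePair G α) = Nat.card (CompatiblePair (G.deleteEdges {s(u, v)}) α) +
      Nat.card {q : CompatiblePair (G.deleteEdges {s(u, v)}) α //
        q.AdmitsArc u v ∧ q.AdmitsArc v u} := by
  classical
  have hvu : {p : CompatiblePair G α // ¬ p.1.2 u v} ≃ {p : CompatiblePair G α // p.1.2 v u} :=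
    Equiv.subtypeEquivRight fun p => (p.2.1.2 v u huv.symm).symm
  rw [← Nat.card_congr (Equiv.sumCompl fun p : CompatiblePair G α => p.1.2 u v), Nat.card_sum,
    Nat.card_congr hvu, Nat.card_congr (equivAdmitsArc huv),
    Nat.card_congr (equivAdmitsArc huv.symm), Sym2.eq_swap]
  exact Nat.card_subtype_add_card_subtype_of_or fun q => q.admitsArc_or_admitsArc huv.ne

end CompatiblePair

section Contraction
variable {V α : Type*} {u v : V} (hne : u ≠ v)

open scoped Classical in
noncomputable def collapse (x : V) : {x : V // x ≠ v} := if h : x = v then ⟨u, hne⟩ else ⟨x, h⟩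

@[simp]
theorem collapse_coe (a : {x : V // x ≠ v}) : collapse hne a = a := by
  simp [collapse, a.2]

theorem collapse_right_eq_left : collapse hne v = collapse hne u := by
  simp [collapse, hne]

theorem eq_or_mem_of_collapse_eq {a b : V} (h : collapse hne a = collapse hne b) :
    a = b ∨ a ∈ ({u, v} : Set V) ∧ b ∈ ({u, v} : Set V) := by
  unfold collapse at h
  split_ifs at h <;> simp_all [Subtype.ext_iff]

theorem apply_collapse_of_apply_eq {σ : V → α} (hσ : σ u = σ v) (x : V) :
    σ (collapse hne x) = σ x := by
  unfold collapse
  split_ifs with h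
  exacts [h ▸ hσ, rfl]

/-- The contraction `G / uv`; the merged vertex is `u`. -/
noncomputable def SimpleGraph.contractEdge (G : SimpleGraph V) : SimpleGraph {x : V // x ≠ v} :=
  (G.deleteEdges {s(u, v)}).map (collapse hne)

variable {G : SimpleGraph V}

theorem collapse_ne_collapse {a b : V} (h : (G.deleteEdges {s(u, v)}).Adj a b) :
    collapse hne a ≠ collapse hne b := by
  intro he
  rcases eq_or_mem_of_collapse_eq hne he with rfl | ⟨ha, hb⟩
  · exact h.ne rfl
  · simp only [Set.mem_insert_iff, Set.mem_singleton_iff] at ha hb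
    rcases ha with rfl | rfl <;> rcases hb with rfl | rfl <;> simp_all [Sym2.eq_swap]

theorem deleteEdges_le_comap_contractEdge :
    G.deleteEdges {s(u, v)} ≤ (G.contractEdge hne).comap (collapse hne) :=
  fun _ _ h => map_adj_apply' h (collapse_ne_collapse hne h)

noncomputable def contractEdgeColoringEquiv :
    {σ : V → α // (∀ a b, (G.deleteEdges {s(u, v)}).Adj a b → σ a ≠ σ b) ∧ σ u = σ v} ≃
      {τ : {x : V // x ≠ v} → α // ∀ a b, (G.contractEdge hne).Adj a b → τ a ≠ τ b} where
  toFun := fun ⟨σ, hσ, hσuv⟩ => ⟨fun a => σ a, by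
    rintro _ _ ⟨-, a, b, hab, rfl, rfl⟩
    simpa only [apply_collapse_of_apply_eq hne hσuv] using hσ a b hab⟩
  invFun := fun ⟨τ, hτ⟩ => ⟨fun x => τ (collapse hne x),
    fun a b hab => hτ _ _ (deleteEdges_le_comap_contractEdge hne hab),
    congrArg τ (collapse_right_eq_left hne).symm⟩
  left_inv := fun ⟨σ, _, hσuv⟩ => Subtype.ext (funext (apply_collapse_of_apply_eq hne hσuv))
  right_inv := fun ⟨τ, _⟩ => Subtype.ext (funext fun a => congrArg τ (collapse_coe hne a))

variable {O : V → V → Prop}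

theorem isAcyclicRel_map_collapse (hAuv : IsAcyclicRel (addArc O u v))
    (hAvu : IsAcyclicRel (addArc O v u)) :
    IsAcyclicRel (Relation.Map O (collapse hne) (collapse hne)) := by
  obtain ⟨hA, hvu⟩ := isAcyclicRel_addArc_iff.1 hAuv
  have huv := (isAcyclicRel_addArc_iff.1 hAvu).2
  refine hA.map_of_glue (S := {u, v}) ?_ fun a b => eq_or_mem_of_collapse_eq hne
  simp only [Set.mem_insert_iff, Set.mem_singleton_iff]
  rintro s (rfl | rfl) t (rfl | rfl) hst
  exacts [hA _ hst, huv hst.to_reflTransGen, hvu hst.to_reflTransGen, hA _ hst]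

theorem IsOrientation.map_collapse (hO : IsOrientation (G.deleteEdges {s(u, v)}) O)
    (hA : IsAcyclicRel (Relation.Map O (collapse hne) (collapse hne))) :
    IsOrientation (G.contractEdge hne) (Relation.Map O (collapse hne) (collapse hne)) := by
  refine ⟨?_, fun c d hcd => ⟨hA.asymm, fun hdc => ?_⟩⟩
  · rintro _ _ ⟨a, b, hab, rfl, rfl⟩
    exact deleteEdges_le_comap_contractEdge hne (hO.1 a b hab)
  · obtain ⟨-, a, b, hab, rfl, rfl⟩ := hcd
    exact ⟨a, b, (hO.2 a b hab).2 fun hba => hdc ⟨b, a, hba, rfl, rfl⟩, rfl, rfl⟩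

theorem restrict_comap_map_collapse (hO : IsOrientation (G.deleteEdges {s(u, v)}) O)
    (hA : IsAcyclicRel (Relation.Map O (collapse hne) (collapse hne))) :
    (fun a b => Relation.Map O (collapse hne) (collapse hne) (collapse hne a) (collapse hne b) ∧
      (G.deleteEdges {s(u, v)}).Adj a b) = O := by
  ext a b
  refine ⟨fun ⟨hm, hab⟩ => ?_, fun h => ⟨⟨a, b, h, rfl, rfl⟩, hO.1 a b h⟩⟩
  by_contra hn
  exact hA.asymm hm ⟨b, a, (hO.2 b a hab.symm).2 hn, rfl, rfl⟩

theorem map_restrict_comap_collapse {O : {x : V // x ≠ v} → {x : V // x ≠ v} → Prop}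
    (hO : IsOrientation (G.contractEdge hne) O) :
    Relation.Map (fun a b => O (collapse hne a) (collapse hne b) ∧
      (G.deleteEdges {s(u, v)}).Adj a b) (collapse hne) (collapse hne) = O := by
  ext c d
  refine ⟨fun ⟨a, b, h, hc, hd⟩ => hc ▸ hd ▸ h.1, fun h => ?_⟩
  obtain ⟨-, a, b, hab, rfl, rfl⟩ := hO.1 c d h
  exact ⟨a, b, ⟨h, hab⟩, rfl, rfl⟩

variable [LinearOrder α]

noncomputable def CompatiblePair.contractEquiv :
    {q : CompatiblePair (G.deleteEdges {s(u, v)}) α // q.AdmitsArc u v ∧ q.AdmitsArc v u} ≃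
      CompatiblePair (G.contractEdge hne) α where
  toFun := fun ⟨⟨⟨σ, O⟩, hO, _, hC⟩, ⟨hσvu, hAuv⟩, ⟨hσuv, hAvu⟩⟩ =>
    have hA := isAcyclicRel_map_collapse hne hAuv hAvu
    ⟨(fun a => σ a, Relation.Map O (collapse hne) (collapse hne)), hO.map_collapse hne hA, hA, by
      rintro _ _ ⟨a, b, hab, rfl, rfl⟩
      simpa only [apply_collapse_of_apply_eq (σ := σ) hne (le_antisymm hσuv hσvu)] using hC a b hab⟩
  invFun := fun ⟨⟨τ, O⟩, hO, hA, hC⟩ =>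
    have hle : (fun a b => O (collapse hne a) (collapse hne b) ∧
        (G.deleteEdges {s(u, v)}).Adj a b) ≤ fun a b => O (collapse hne a) (collapse hne b) :=
      fun _ _ => And.left
    ⟨⟨(fun x => τ (collapse hne x), fun a b => O (collapse hne a) (collapse hne b) ∧
          (G.deleteEdges {s(u, v)}).Adj a b),
        (hO.comap _).restrict (deleteEdges_le_comap_contractEdge hne), (hA.onFun _).mono hle,
        fun a b h => hC _ _ h.1⟩,
      ⟨(congrArg τ (collapse_right_eq_left hne)).le,
        isAcyclicRel_addArc_of_le_onFun hA hle hne (collapse_right_eq_left hne).symm⟩,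
      ⟨(congrArg τ (collapse_right_eq_left hne)).ge,
        isAcyclicRel_addArc_of_le_onFun hA hle hne.symm (collapse_right_eq_left hne)⟩⟩
  left_inv := fun ⟨⟨⟨σ, O⟩, hO, _, _⟩, ⟨hσvu, hAuv⟩, ⟨hσuv, hAvu⟩⟩ =>
    Subtype.ext <| Subtype.ext <| Prod.ext
      (funext (apply_collapse_of_apply_eq (σ := σ) hne (le_antisymm hσuv hσvu)))
      (restrict_comap_map_collapse hne hO (isAcyclicRel_map_collapse hne hAuv hAvu))
  right_inv := fun ⟨⟨τ, _⟩, hO, _, _⟩ =>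
    Subtype.ext <| Prod.ext (funext fun a => congrArg τ (collapse_coe hne a))
      (map_restrict_comap_collapse hne hO)

end Contraction

section Counting
variable {V : Type*} [Finite V] {G : SimpleGraph V} {u v : V}

theorem properColoringCount_deleteEdges (huv : G.Adj u v) (m : ℕ) :
    properColoringCount (G.deleteEdges {s(u, v)}) m =
      properColoringCount G m + properColoringCount (G.contractEdge huv.ne) m := by
  rw [properColoringCount, Nat.card_subtype_eq_card_and_add_card_and_not _ fun σ => σ u = σ v,
    add_comm, Nat.card_congr (deleteEdgesColoringEquiv huv),
    Nat.card_congr (contractEdgeColoringEquiv huv.ne)]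
  rfl

theorem CompatiblePair.card_eq_card_deleteEdges_add_card_contractEdge {α : Type*} [LinearOrder α]
    [Finite α] (huv : G.Adj u v) :
    Nat.card (CompatiblePair G α) = Nat.card (CompatiblePair (G.deleteEdges {s(u, v)}) α) +
      Nat.card (CompatiblePair (G.contractEdge huv.ne) α) := by
  rw [card_eq_card_deleteEdges_add huv, Nat.card_congr (contractEquiv huv.ne)]

theorem card_edgeSet_deleteEdges_lt (huv : G.Adj u v) :
    Nat.card (G.deleteEdges {s(u, v)}).edgeSet < Nat.card G.edgeSet := by
  rw [edgeSet_deleteEdges, Nat.card_coe_set_eq, Nat.card_coe_set_eq]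
  exact Set.ncard_sdiff_singleton_lt_of_mem huv

theorem card_edgeSet_contractEdge_le (hne : u ≠ v) :
    Nat.card (G.contractEdge hne).edgeSet ≤ Nat.card (G.deleteEdges {s(u, v)}).edgeSet := by
  have hsub : (G.contractEdge hne).edgeSet ⊆
      Sym2.map (collapse hne) '' (G.deleteEdges {s(u, v)}).edgeSet := by
    intro e he
    induction e using Sym2.ind with
    | _ c d =>
      obtain ⟨-, a, b, hab, rfl, rfl⟩ := he
      exact ⟨s(a, b), hab, rfl⟩
  rw [Nat.card_coe_set_eq, Nat.card_coe_set_eq]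
  exact (Set.ncard_le_ncard hsub).trans Set.ncard_image_le

theorem properColoringCount_of_forall_not_adj (hG : ∀ a b, ¬ G.Adj a b) (m : ℕ) :
    properColoringCount G m = m ^ Nat.card V := by
  rw [properColoringCount, Nat.card_congr (Equiv.subtypeUnivEquiv fun σ a b h => (hG a b h).elim),
    Nat.card_fun, Nat.card_fin]

theorem CompatiblePair.card_of_forall_not_adj {α : Type*} [LinearOrder α]
    (hG : ∀ a b, ¬ G.Adj a b) : Nat.card (CompatiblePair G α) = Nat.card α ^ Nat.card V := by
  have hO (p : CompatiblePair G α) : p.1.2 = fun _ _ => False :=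
    funext₂ fun a b => propext ⟨fun h => hG a b (p.2.1.1 a b h), False.elim⟩
  have hA : IsAcyclicRel fun _ _ : V => False :=
    fun _ h => (TransGen.head'_iff.1 h).elim fun _ h => h.1
  let e : CompatiblePair G α ≃ (V → α) :=
    { toFun p := p.1.1
      invFun σ := ⟨(σ, fun _ _ => False), ⟨fun _ _ => False.elim, fun a b h => (hG a b h).elim⟩,
        hA, fun _ _ => False.elim⟩
      left_inv p := Subtype.ext (Prod.ext rfl (hO p).symm)
      right_inv _ := rfl }
  rw [Nat.card_congr e, Nat.card_fun]

end Counting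

theorem IsChromaticPoly.unique {V : Type*} {G : SimpleGraph V} {P Q : ℤ[X]}
    (hP : IsChromaticPoly G P) (hQ : IsChromaticPoly G Q) : P = Q :=
  eq_of_infinite_eval_eq P Q <| Set.infinite_of_injective_forall_mem Nat.cast_injective
    fun n => (hP n).trans (hQ n).symm

theorem exists_isChromaticPoly_neg_eval {V : Type*} [Finite V] (G : SimpleGraph V) :
    ∃ Q : ℤ[X], IsChromaticPoly G Q ∧ ∀ k : ℕ,
      (-1) ^ Nat.card V * Q.eval (-(k : ℤ)) = Nat.card (CompatiblePair G (Fin k)) := by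
  induction hn : Nat.card G.edgeSet using Nat.strong_induction_on generalizing V with
  | _ n ih =>
  by_cases hG : ∀ a b, ¬ G.Adj a b
  · refine ⟨X ^ Nat.card V, fun m => ?_, fun k => ?_⟩
    · simp [properColoringCount_of_forall_not_adj hG]
    · rw [CompatiblePair.card_of_forall_not_adj hG, eval_pow, eval_X, ← mul_pow]
      simp
  push Not at hG
  obtain ⟨u, v, huv⟩ := hG
  have hlt := card_edgeSet_deleteEdges_lt huv
  obtain ⟨Q₁, hQ₁, hR₁⟩ := ih _ (hn ▸ hlt) (G.deleteEdges {s(u, v)}) rfl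
  obtain ⟨Q₂, hQ₂, hR₂⟩ :=
    ih _ (hn ▸ (card_edgeSet_contractEdge_le huv.ne).trans_lt hlt) (G.contractEdge huv.ne) rfl
  refine ⟨Q₁ - Q₂, fun m => ?_, fun k => ?_⟩
  · have hrec := properColoringCount_deleteEdges huv m
    rw [eval_sub, hQ₁, hQ₂, hrec]
    push_cast
    ring
  · have hrec := CompatiblePair.card_eq_card_deleteEdges_add_card_contractEdge huv (α := Fin k)
    rw [← Nat.card_subtype_ne_add_one v] at hR₁ ⊢
    rw [eval_sub, hrec]
    push_cast
    linear_combination hR₁ k + hR₂ k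

theorem neg_eval_eq_compatible_pairs_count_general {V : Type*} [Fintype V]
    (G : SimpleGraph V) (P : Polynomial ℤ) (hP : IsChromaticPoly G P)
    (k : ℕ) :
    (-1 : ℤ) ^ (Fintype.card V) * P.eval (-(k : ℤ)) =
      Nat.card {p : (V → Fin k) × (V → V → Prop) //
        IsOrientation G p.2 ∧ IsAcyclicRel p.2 ∧ ∀ u w, p.2 u w → p.1 w ≤ p.1 u} := by
  obtain ⟨Q, hQ, hQ_neg⟩ := exists_isChromaticPoly_neg_eval G
  rw [hP.unique hQ, Fintype.card_eq_nat_card]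
  exact hQ_neg k

/-- Stanley's reciprocity theorem: `(-1)^|V| χ_G(-k)` counts pairs `(σ, O)` of a map
`σ : V → {1,…,k}` and an acyclic orientation `O` of `G` such that `u → w` implies
`σ(u) ≥ σ(w)`. -/
theorem neg_eval_eq_compatible_pairs_count {V : Type*} [Fintype V]
    (G : SimpleGraph V) (P : Polynomial ℤ) (hP : IsChromaticPoly G P)
    (k : ℕ) (hk : 1 ≤ k) :
    (-1 : ℤ) ^ (Fintype.card V) * P.eval (-(k : ℤ)) =
      Nat.card {p : (V → Fin k) × (V → V → Prop) //
        IsOrientation G p.2 ∧ IsAcyclicRel p.2 ∧ ∀ u w, p.2 u w → p.1 w ≤ p.1 u} :=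
  neg_eval_eq_compatible_pairs_count_general G P hP k
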